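/- Every three-dimensional anticommutative algebra over ℂ corresponds to a 3×3 complex matrix A^μ with (i,j)-entry (-1)^{i-1} c_{u,v}^j (where {u,v} = {1,2,3}∖{i}, u < v), and two anticommutative structures μ, λ on ℂ³ with matrices A^μ, A^λ related by A^λ = Xᵀ A^μ X for some invertible X are isomorphic as algebras via the map determined by X. -/
import Mathlib


open Finset in
/-- The bilinear multiplication on ℂ³ determined by structure constants
`c : Fin 3 → Fin 3 → Fin 3 → ℂ` (so `μ(e_i, e_j) = ∑ k, c i j k • e_k`). -/
noncomputable def mulOf (c : Fin 3 → Fin 3 → Fin 3 → ℂ) (x y : Fin 3 → ℂ) : Fin 3 → ℂ :=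
  fun k => ∑ i, ∑ j, x i * y j * c i j k

/-- The `3 × 3` matrix `A^μ` attached to an anticommutative structure `μ` with
structure constants `c`: its `(i,j)` entry is `(-1)^{i-1} c_{u,v}^j`, where
`{u,v} = {1,2,3} ∖ {i}`, `u < v` (here written with `0`-based indices). -/
def Amat (c : Fin 3 → Fin 3 → Fin 3 → ℂ) : Matrix (Fin 3) (Fin 3) ℂ :=
  Matrix.of ![![c 1 2 0, c 1 2 1, c 1 2 2],
              ![-c 0 2 0, -c 0 2 1, -c 0 2 2],
              ![c 0 1 0, c 0 1 1, c 0 1 2]]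

/-- cofactor matrix of `X`, i.e. `(adjugate X)ᵀ = det X • X⁻ᵀ`. -/
def Ymat (X : Matrix (Fin 3) (Fin 3) ℂ) : Matrix (Fin 3) (Fin 3) ℂ :=
  Matrix.of ![![X 1 1 * X 2 2 - X 1 2 * X 2 1, -(X 1 0 * X 2 2 - X 1 2 * X 2 0), X 1 0 * X 2 1 - X 1 1 * X 2 0],
              ![-(X 0 1 * X 2 2 - X 0 2 * X 2 1), X 0 0 * X 2 2 - X 0 2 * X 2 0, -(X 0 0 * X 2 1 - X 0 1 * X 2 0)],
              ![X 0 1 * X 1 2 - X 0 2 * X 1 1, -(X 0 0 * X 1 2 - X 0 2 * X 1 0), X 0 0 * X 1 1 - X 0 1 * X 1 0]]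

lemma Ymat_mul (X : Matrix (Fin 3) (Fin 3) ℂ) :
    Ymat X * X.transpose = X.det • 1 := by
  ext i j
  fin_cases i <;> fin_cases j <;>
    simp [Ymat, Matrix.mul_apply, Fin.sum_univ_three, Matrix.det_fin_three,
      Matrix.one_apply, Matrix.transpose_apply] <;> ring

lemma mul_Ymat (X : Matrix (Fin 3) (Fin 3) ℂ) :
    X.transpose * Ymat X = X.det • 1 := by
  ext i j
  fin_cases i <;> fin_cases j <;>
    simp [Ymat, Matrix.mul_apply, Fin.sum_univ_three, Matrix.det_fin_three,
      Matrix.one_apply, Matrix.transpose_apply] <;> ring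

lemma mulOf_eq (c : Fin 3 → Fin 3 → Fin 3 → ℂ) (hc : ∀ i j k, c i j k = -c j i k)
    (x y : Fin 3 → ℂ) (k : Fin 3) :
    mulOf c x y k = (x 0 * y 1 - x 1 * y 0) * c 0 1 k
      + (x 0 * y 2 - x 2 * y 0) * c 0 2 k + (x 1 * y 2 - x 2 * y 1) * c 1 2 k := by
  have h0 : ∀ i k, c i i k = 0 := fun i k => by linear_combination (hc i i k) / 2
  simp only [mulOf, Fin.sum_univ_three, hc 1 0, hc 2 0, hc 2 1, h0]
  ring

/-- If `μ` and `λ` are anticommutative algebra structures on ℂ³ whose associated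
matrices satisfy the congruence `A^λ = Xᵀ A^μ X` for some invertible `X`, then the
two algebras are isomorphic. -/
theorem stmt_17 (c d : Fin 3 → Fin 3 → Fin 3 → ℂ)
    (hc : ∀ i j k, c i j k = -c j i k) (hd : ∀ i j k, d i j k = -d j i k)
    (X : Matrix (Fin 3) (Fin 3) ℂ) (hX : IsUnit X.det)
    (hcong : Amat d = X.transpose * Amat c * X) :
    ∃ φ : (Fin 3 → ℂ) ≃ₗ[ℂ] (Fin 3 → ℂ),
      ∀ x y, φ (mulOf d x y) = mulOf c (φ x) (φ y) := by
  have hdet : X.det ≠ 0 := hX.ne_zero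
  set Y := Ymat X with hY
  set Z := (X.det)⁻¹ • X.transpose with hZ
  have hYZ : Y * Z = 1 := by
    rw [hZ, Matrix.mul_smul, Ymat_mul, smul_smul, inv_mul_cancel₀ hdet, one_smul]
  have hZY : Z * Y = 1 := by
    rw [hZ, Matrix.smul_mul, mul_Ymat, smul_smul, inv_mul_cancel₀ hdet, one_smul]
  refine ⟨LinearEquiv.ofLinear (Matrix.toLin' Y) (Matrix.toLin' Z) ?_ ?_, ?_⟩
  · rw [← Matrix.toLin'_mul, hYZ, Matrix.toLin'_one]
  · rw [← Matrix.toLin'_mul, hZY, Matrix.toLin'_one]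
  intro x y
  have e00 := congrFun (congrFun hcong 0) 0
  simp only [Amat, Matrix.mul_apply, Fin.sum_univ_three, Matrix.transpose_apply,
    Matrix.of_apply, Matrix.cons_val_zero, Matrix.cons_val_one, Matrix.head_cons,
    Matrix.cons_val_two, Matrix.tail_cons, Matrix.head_fin_const, neg_eq_iff_eq_neg] at e00
  have e01 := congrFun (congrFun hcong 0) 1
  simp only [Amat, Matrix.mul_apply, Fin.sum_univ_three, Matrix.transpose_apply,
    Matrix.of_apply, Matrix.cons_val_zero, Matrix.cons_val_one, Matrix.head_cons,
    Matrix.cons_val_two, Matrix.tail_cons, Matrix.head_fin_const, neg_eq_iff_eq_neg] at e01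
  have e02 := congrFun (congrFun hcong 0) 2
  simp only [Amat, Matrix.mul_apply, Fin.sum_univ_three, Matrix.transpose_apply,
    Matrix.of_apply, Matrix.cons_val_zero, Matrix.cons_val_one, Matrix.head_cons,
    Matrix.cons_val_two, Matrix.tail_cons, Matrix.head_fin_const, neg_eq_iff_eq_neg] at e02
  have e10 := congrFun (congrFun hcong 1) 0
  simp only [Amat, Matrix.mul_apply, Fin.sum_univ_three, Matrix.transpose_apply,
    Matrix.of_apply, Matrix.cons_val_zero, Matrix.cons_val_one, Matrix.head_cons,
    Matrix.cons_val_two, Matrix.tail_cons, Matrix.head_fin_const, neg_eq_iff_eq_neg] at e10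
  have e11 := congrFun (congrFun hcong 1) 1
  simp only [Amat, Matrix.mul_apply, Fin.sum_univ_three, Matrix.transpose_apply,
    Matrix.of_apply, Matrix.cons_val_zero, Matrix.cons_val_one, Matrix.head_cons,
    Matrix.cons_val_two, Matrix.tail_cons, Matrix.head_fin_const, neg_eq_iff_eq_neg] at e11
  have e12 := congrFun (congrFun hcong 1) 2
  simp only [Amat, Matrix.mul_apply, Fin.sum_univ_three, Matrix.transpose_apply,
    Matrix.of_apply, Matrix.cons_val_zero, Matrix.cons_val_one, Matrix.head_cons,
    Matrix.cons_val_two, Matrix.tail_cons, Matrix.head_fin_const, neg_eq_iff_eq_neg] at e12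
  have e20 := congrFun (congrFun hcong 2) 0
  simp only [Amat, Matrix.mul_apply, Fin.sum_univ_three, Matrix.transpose_apply,
    Matrix.of_apply, Matrix.cons_val_zero, Matrix.cons_val_one, Matrix.head_cons,
    Matrix.cons_val_two, Matrix.tail_cons, Matrix.head_fin_const, neg_eq_iff_eq_neg] at e20
  have e21 := congrFun (congrFun hcong 2) 1
  simp only [Amat, Matrix.mul_apply, Fin.sum_univ_three, Matrix.transpose_apply,
    Matrix.of_apply, Matrix.cons_val_zero, Matrix.cons_val_one, Matrix.head_cons,
    Matrix.cons_val_two, Matrix.tail_cons, Matrix.head_fin_const, neg_eq_iff_eq_neg] at e21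
  have e22 := congrFun (congrFun hcong 2) 2
  simp only [Amat, Matrix.mul_apply, Fin.sum_univ_three, Matrix.transpose_apply,
    Matrix.of_apply, Matrix.cons_val_zero, Matrix.cons_val_one, Matrix.head_cons,
    Matrix.cons_val_two, Matrix.tail_cons, Matrix.head_fin_const, neg_eq_iff_eq_neg] at e22
  funext k
  show (Y.mulVec (mulOf d x y)) k = mulOf c (Y.mulVec x) (Y.mulVec y) k
  fin_cases k
  · show (Y.mulVec (mulOf d x y)) 0 = mulOf c (Y.mulVec x) (Y.mulVec y) 0
    simp only [Matrix.mulVec, dotProduct, Fin.sum_univ_three,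
      mulOf_eq d hd, mulOf_eq c hc, hY, Ymat, Matrix.of_apply,
      Matrix.cons_val_zero, Matrix.cons_val_one, Matrix.head_cons,
      Matrix.cons_val_two, Matrix.tail_cons]
    rw [e00, e01, e02, e10, e11, e12, e20, e21, e22]
    ring
  · show (Y.mulVec (mulOf d x y)) 1 = mulOf c (Y.mulVec x) (Y.mulVec y) 1
    simp only [Matrix.mulVec, dotProduct, Fin.sum_univ_three,
      mulOf_eq d hd, mulOf_eq c hc, hY, Ymat, Matrix.of_apply,
      Matrix.cons_val_zero, Matrix.cons_val_one, Matrix.head_cons,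
      Matrix.cons_val_two, Matrix.tail_cons]
    rw [e00, e01, e02, e10, e11, e12, e20, e21, e22]
    ring
  · show (Y.mulVec (mulOf d x y)) 2 = mulOf c (Y.mulVec x) (Y.mulVec y) 2
    simp only [Matrix.mulVec, dotProduct, Fin.sum_univ_three,
      mulOf_eq d hd, mulOf_eq c hc, hY, Ymat, Matrix.of_apply,
      Matrix.cons_val_zero, Matrix.cons_val_one, Matrix.head_cons,
      Matrix.cons_val_two, Matrix.tail_cons]
    rw [e00, e01, e02, e10, e11, e12, e20, e21, e22]
    ring
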